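/- For all integers n ≥ 3 and all integers k with 1 ≤ k ≤ n−1, ∑_{j=k+1}^{n−1} [∏_{m=j+2}^{n} (1 − 3/C(m,2))] · (1/C(j+1,2)) · [∏_{m=k+2}^{j} (1 − 1/C(m,2))] · (1/C(k+1,2)) = 4(n+1)(n−k−1)/((n−1)(n−2)(k+1)(k+2)(k+3)), where C(m,2) = m(m−1)/2 and empty products equal 1. -/

import Mathlib

/-!
Both factors telescope: `1 - 1 / C(m,2) = g₁ m / g₁ (m - 1)` with `g₁ x = (x + 1) / (x - 1)`, and
`1 - 3 / C(m,2) = g₃ m / g₃ (m - 1)` with `g₃ x = (x + 1)(x + 2) / ((x - 1)(x - 2))`. After the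
products collapse, the `j`-th summand is a constant (in `j`) times `1 / (j + 2) - 1 / (j + 3)`, so
the sum telescopes as well.
-/

open Finset

lemma prod_Icc_div_sub_one {K : Type*} [Field K] (G : K → K) {a b : ℕ} (hab : a ≤ b)
    (hG : ∀ i ∈ Icc a b, G i ≠ 0) :
    ∏ m ∈ Icc (a + 1) b, G m / G ((m : K) - 1) = G b / G a := by
  induction b, hab using Nat.le_induction with
  | base => simp [div_self (hG a (by simp))]
  | succ b hab ih =>
    rw [prod_Icc_succ_top (by omega), ih fun i hi => hG i (Icc_subset_Icc_right (by omega) hi)]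
    push_cast
    rw [add_sub_cancel_right, mul_comm,
      div_mul_div_cancel₀ (hG b (mem_Icc.2 ⟨hab, by omega⟩))]

lemma prod_one_sub_one_div_choose_two {a b : ℕ} (ha : 2 ≤ a) (hab : a ≤ b) :
    ∏ m ∈ Icc (a + 1) b, (1 - 1 / ((m : ℝ) * ((m : ℝ) - 1) / 2)) =
      ((b + 1) / (b - 1)) / ((a + 1) / (a - 1)) := by
  rw [← prod_Icc_div_sub_one (fun x : ℝ => (x + 1) / (x - 1)) hab]
  · refine prod_congr rfl fun m hm => ?_
    have hm : (3 : ℝ) ≤ m := by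
      exact_mod_cast (show 3 ≤ m by have := mem_Icc.1 hm; omega)
    have h0 : (m : ℝ) ≠ 0 := by linarith
    have h1 : (m : ℝ) - 1 ≠ 0 := by linarith
    have h2 : (m : ℝ) - 1 - 1 ≠ 0 := by linarith
    rw [sub_add_cancel]
    field_simp
    ring
  · intro i hi
    have hi : (2 : ℝ) ≤ i := by
      exact_mod_cast (show 2 ≤ i by have := mem_Icc.1 hi; omega)
    have h1 : (i : ℝ) - 1 ≠ 0 := by linarith
    have h2 : (i : ℝ) + 1 ≠ 0 := by linarith
    exact div_ne_zero h2 h1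

lemma prod_one_sub_three_div_choose_two {a b : ℕ} (ha : 3 ≤ a) (hab : a ≤ b) :
    ∏ m ∈ Icc (a + 1) b, (1 - 3 / ((m : ℝ) * ((m : ℝ) - 1) / 2)) =
      ((b + 1) * (b + 2) / ((b - 1) * (b - 2))) / ((a + 1) * (a + 2) / ((a - 1) * (a - 2))) := by
  rw [← prod_Icc_div_sub_one (fun x : ℝ => (x + 1) * (x + 2) / ((x - 1) * (x - 2))) hab]
  · refine prod_congr rfl fun m hm => ?_
    have hm : (4 : ℝ) ≤ m := by
      exact_mod_cast (show 4 ≤ m by have := mem_Icc.1 hm; omega)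
    have h0 : (m : ℝ) ≠ 0 := by linarith
    have h1 : (m : ℝ) - 1 ≠ 0 := by linarith
    have h2 : (m : ℝ) - 2 ≠ 0 := by linarith
    have h3 : (m : ℝ) - 1 - 1 ≠ 0 := by linarith
    have h4 : (m : ℝ) - 1 - 2 ≠ 0 := by linarith
    have h5 : (m : ℝ) - 1 + 2 ≠ 0 := by linarith
    rw [sub_add_cancel]
    field_simp
    ring
  · intro i hi
    have hi : (3 : ℝ) ≤ i := by
      exact_mod_cast (show 3 ≤ i by have := mem_Icc.1 hi; omega)
    have h1 : (i : ℝ) - 1 ≠ 0 := by linarith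
    have h2 : (i : ℝ) - 2 ≠ 0 := by linarith
    have h3 : (i : ℝ) + 1 ≠ 0 := by linarith
    have h4 : (i : ℝ) + 2 ≠ 0 := by linarith
    exact div_ne_zero (mul_ne_zero h3 h4) (mul_ne_zero h1 h2)

lemma sum_Ico_one_div_sub_one_div {a b : ℕ} (hab : a ≤ b) :
    ∑ j ∈ Ico a b, (1 / ((j : ℝ) + 2) - 1 / ((j : ℝ) + 3)) =
      1 / ((a : ℝ) + 2) - 1 / ((b : ℝ) + 2) := by
  have h := sum_Ico_sub (fun j : ℕ => -(1 / ((j : ℝ) + 2))) hab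
  push_cast at h
  convert h using 1
  · refine sum_congr rfl fun j _ => ?_
    ring
  · ring

lemma summand_eq_mul_one_div_sub_one_div {n k j : ℕ} (hk : 1 ≤ k) (hkj : k + 1 ≤ j)
    (hjn : j + 1 ≤ n) :
    (∏ m ∈ Icc (j + 2) n, (1 - 3 / ((m : ℝ) * ((m : ℝ) - 1) / 2))) *
        (1 / (((j : ℝ) + 1) * ((j : ℝ) + 1 - 1) / 2)) *
      (∏ m ∈ Icc (k + 2) j, (1 - 1 / ((m : ℝ) * ((m : ℝ) - 1) / 2))) *
        (1 / (((k : ℝ) + 1) * ((k : ℝ) + 1 - 1) / 2)) =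
    4 * ((n : ℝ) + 1) * ((n : ℝ) + 2) /
        (((n : ℝ) - 1) * ((n : ℝ) - 2) * ((k : ℝ) + 1) * ((k : ℝ) + 2)) *
      (1 / ((j : ℝ) + 2) - 1 / ((j : ℝ) + 3)) := by
  rw [prod_one_sub_three_div_choose_two (a := j + 1) (by omega) hjn,
    prod_one_sub_one_div_choose_two (a := k + 1) (by omega) hkj]
  have hk : (1 : ℝ) ≤ k := by exact_mod_cast hk
  have hkj : (k : ℝ) + 1 ≤ j := by exact_mod_cast hkj
  have hjn : (j : ℝ) + 1 ≤ n := by exact_mod_cast hjn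
  push_cast
  simp only [add_sub_cancel_right]
  have : (n : ℝ) - 2 ≠ 0 := by linarith
  have : (n : ℝ) - 1 ≠ 0 := by linarith
  have : (j : ℝ) - 1 ≠ 0 := by linarith
  have : (j : ℝ) ≠ 0 := by linarith
  have : (k : ℝ) ≠ 0 := by linarith
  field_simp
  ring

theorem stmt1 (n k : ℕ) (hn : 3 ≤ n) (hk1 : 1 ≤ k) (hk2 : k ≤ n - 1) :
    ∑ j ∈ Finset.Icc (k + 1) (n - 1),
      (∏ m ∈ Finset.Icc (j + 2) n, (1 - 3 / ((m : ℝ) * ((m : ℝ) - 1) / 2))) *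
        (1 / (((j : ℝ) + 1) * ((j : ℝ) + 1 - 1) / 2)) *
      (∏ m ∈ Finset.Icc (k + 2) j, (1 - 1 / ((m : ℝ) * ((m : ℝ) - 1) / 2))) *
        (1 / (((k : ℝ) + 1) * ((k : ℝ) + 1 - 1) / 2)) =
    4 * ((n : ℝ) + 1) * ((n : ℝ) - (k : ℝ) - 1) /
      (((n : ℝ) - 1) * ((n : ℝ) - 2) * ((k : ℝ) + 1) * ((k : ℝ) + 2) * ((k : ℝ) + 3)) := by
  have hIcc : Icc (k + 1) (n - 1) = Ico (k + 1) n := by ext; simp; omega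
  rw [hIcc, sum_congr rfl fun j hj =>
      summand_eq_mul_one_div_sub_one_div hk1 (mem_Ico.1 hj).1 (mem_Ico.1 hj).2,
    ← mul_sum, sum_Ico_one_div_sub_one_div (by omega)]
  have hn₃ : (3 : ℝ) ≤ n := by exact_mod_cast hn
  have : (n : ℝ) - 2 ≠ 0 := by linarith
  have : (n : ℝ) - 1 ≠ 0 := by linarith
  push_cast
  field_simp
  ring
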